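/- arXiv:1311.7199 — 5 statements merged into one kernel-verified Lean document; each statement's English description precedes it below -/
import Mathlib

section
/- For positive definite n×n matrices A and B, the geometric mean A # B := A^{1/2}(A^{-1/2} B A^{-1/2})^{1/2} A^{1/2} satisfies: A # B is the maximum, in the Löwner order, of the set {X : X positive semidefinite, [[A, X],[X, B]] ≥ 0}. -/
/-!
Write `A = S²` with `S = A^{1/2}` and `A # B = S R S` with `R = (S⁻¹ B S⁻¹)^{1/2}`. For Hermitian
`X = S Y S`, the Schur complement criterion makes `[[A, X], [X, B]] ≥ 0` equivalent to
`X A⁻¹ X ≤ B`, and conjugating by `S⁻¹` turns this into `Y² ≤ R²`. For `X = A # B` (that is,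
`Y = R`) equality holds; for `X ≥ 0` also `Y ≥ 0`, and operator monotonicity of the square root
gives `Y ≤ R`, that is `X ≤ A # B`.
-/

open scoped ComplexOrder
open Matrix

/-- The `t`-th power of a Hermitian matrix, defined via the spectral decomposition
(functional calculus with the real power function). -/
noncomputable def psdPow {n : ℕ} (A : Matrix (Fin n) (Fin n) ℂ) (hA : A.IsHermitian) (t : ℝ) :
    Matrix (Fin n) (Fin n) ℂ :=
  (hA.eigenvectorUnitary : Matrix (Fin n) (Fin n) ℂ) *
    Matrix.diagonal (fun i => ((hA.eigenvalues i ^ t : ℝ) : ℂ)) *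
    (hA.eigenvectorUnitary : Matrix (Fin n) (Fin n) ℂ)ᴴ

lemma psdPow_isHermitian {n : ℕ} (A : Matrix (Fin n) (Fin n) ℂ) (hA : A.IsHermitian) (t : ℝ) :
    (psdPow A hA t).IsHermitian := by
  unfold psdPow
  apply Matrix.isHermitian_mul_mul_conjTranspose
  rw [Matrix.isHermitian_diagonal_iff]
  intro i
  exact Complex.conj_ofReal _

lemma isHermitian_conj {n : ℕ} {C B : Matrix (Fin n) (Fin n) ℂ}
    (hC : C.IsHermitian) (hB : B.IsHermitian) : (C * B * C).IsHermitian := by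
  have := Matrix.isHermitian_mul_mul_conjTranspose C hB
  rwa [hC] at this

/-- The α-weighted geometric mean `A #_α B = A^{1/2} (A^{-1/2} B A^{-1/2})^α A^{1/2}`
of Hermitian (in applications, positive definite) matrices, where `A^{-1/2} = A^{(-1/2)}`
via functional calculus. -/
noncomputable def wGeomMean {n : ℕ} (A B : Matrix (Fin n) (Fin n) ℂ)
    (hA : A.IsHermitian) (hB : B.IsHermitian) (α : ℝ) : Matrix (Fin n) (Fin n) ℂ :=
  psdPow A hA (1/2) *
    psdPow (psdPow A hA (-(1/2)) * B * psdPow A hA (-(1/2)))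
      (isHermitian_conj (psdPow_isHermitian A hA (-(1/2))) hB) α *
    psdPow A hA (1/2)

lemma wGeomMean_isHermitian {n : ℕ} (A B : Matrix (Fin n) (Fin n) ℂ)
    (hA : A.IsHermitian) (hB : B.IsHermitian) (α : ℝ) : (wGeomMean A B hA hB α).IsHermitian :=
  isHermitian_conj (psdPow_isHermitian A hA (1/2)) (psdPow_isHermitian _ _ α)

section psdPow

variable {n : ℕ} {A : Matrix (Fin n) (Fin n) ℂ}

lemma psdPow_add (hA : A.PosDef) (s t : ℝ) :
    psdPow A hA.1 (s + t) = psdPow A hA.1 s * psdPow A hA.1 t := by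
  set U : Matrix (Fin n) (Fin n) ℂ := (hA.1.eigenvectorUnitary : Matrix (Fin n) (Fin n) ℂ)
  have hU : Uᴴ * U = 1 := Unitary.star_mul_self_of_mem hA.1.eigenvectorUnitary.2
  have hpow : ∀ i, ((hA.1.eigenvalues i ^ (s + t) : ℝ) : ℂ) =
      ((hA.1.eigenvalues i ^ s : ℝ) : ℂ) * ((hA.1.eigenvalues i ^ t : ℝ) : ℂ) := fun i => by
    rw [Real.rpow_add (hA.eigenvalues_pos i), Complex.ofReal_mul]
  simp only [psdPow, hpow, ← diagonal_mul_diagonal, Matrix.mul_assoc]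
  rw [← Matrix.mul_assoc Uᴴ U, hU, Matrix.one_mul]

lemma psdPow_zero (hA : A.IsHermitian) : psdPow A hA 0 = 1 := by
  simp only [psdPow, Real.rpow_zero, Complex.ofReal_one, diagonal_one, Matrix.mul_one]
  exact Unitary.mul_star_self_of_mem hA.eigenvectorUnitary.2

lemma psdPow_one (hA : A.IsHermitian) : psdPow A hA 1 = A := by
  simp only [psdPow, Real.rpow_one]
  exact hA.spectral_theorem.symm

lemma psdPow_posSemidef (hA : A.PosSemidef) (t : ℝ) : (psdPow A hA.1 t).PosSemidef := by
  refine (posSemidef_diagonal_iff.mpr fun i => ?_).mul_mul_conjTranspose_same _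
  exact Complex.zero_le_real.mpr (Real.rpow_nonneg (hA.eigenvalues_nonneg i) t)

end psdPow

namespace Matrix

variable {ι : Type*} [Fintype ι] [DecidableEq ι]

section RCLike

variable {𝕜 : Type*} [RCLike 𝕜]

theorem posSemidef_conj_iff {S M : Matrix ι ι 𝕜} (hS : S.IsHermitian) (hSu : IsUnit S) :
    (S * M * S).PosSemidef ↔ M.PosSemidef := by
  simpa only [star_eq_conjTranspose, hS.eq] using hSu.posSemidef_star_right_conjugate_iff (x := M)

theorem posSemidef_fromBlocks_mul_self_iff {S Y : Matrix ι ι 𝕜} (B : Matrix ι ι 𝕜)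
    (hS : S.IsHermitian) (hSS : (S * S).PosDef) (hY : Y.IsHermitian) :
    (fromBlocks (S * S) (S * Y * S) (S * Y * S) B).PosSemidef ↔
      (S⁻¹ * B * S⁻¹ - Y * Y).PosSemidef := by
  have hSu : IsUnit S := isUnit_of_mul_isUnit_left hSS.isUnit
  have : Invertible S := hSu.invertible
  have hX : (S * Y * S)ᴴ = S * Y * S := by
    simpa only [hS.eq] using (isHermitian_mul_mul_conjTranspose S hY).eq
  have hschur : B - (S * Y * S)ᴴ * (S * S)⁻¹ * (S * Y * S) =
      S * (S⁻¹ * B * S⁻¹ - Y * Y) * S := by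
    rw [hX]
    simp only [mul_inv_rev, Matrix.mul_sub, Matrix.sub_mul, Matrix.mul_assoc,
      inv_mul_of_invertible, Matrix.mul_one, mul_inv_cancel_left_of_invertible,
      inv_mul_cancel_left_of_invertible]
  have : Invertible (S * S) := hSS.isUnit.invertible
  have := PosDef.fromBlocks₁₁ (S * Y * S) B hSS
  rwa [hschur, posSemidef_conj_iff hS hSu, hX] at this

end RCLike

open scoped MatrixOrder Matrix.Norms.L2Operator in
theorem PosSemidef.sub_of_mul_self_sub {R Y : Matrix ι ι ℂ} (hR : R.PosSemidef)
    (hY : Y.PosSemidef) (h : (R * R - Y * Y).PosSemidef) : (R - Y).PosSemidef := by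
  have := CFC.sqrt_le_sqrt (Y * Y) (R * R) h
  rwa [CFC.sqrt_mul_self Y hY.nonneg, CFC.sqrt_mul_self R hR.nonneg] at this

variable {A B S R : Matrix ι ι ℂ}

theorem posSemidef_fromBlocks_of_mul_self_eq (hA : A.PosDef) (hS : S.IsHermitian) (hSS : S * S = A)
    (hR : R.IsHermitian) (hRR : R * R = S⁻¹ * B * S⁻¹) :
    (fromBlocks A (S * R * S) (S * R * S) B).PosSemidef := by
  subst hSS
  rw [posSemidef_fromBlocks_mul_self_iff B hS hA hR, hRR, sub_self]
  exact .zero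

theorem sub_posSemidef_of_posSemidef_fromBlocks (hA : A.PosDef) (hS : S.IsHermitian) (hSS : S * S = A)
    (hR : R.PosSemidef) (hRR : R * R = S⁻¹ * B * S⁻¹) {X : Matrix ι ι ℂ} (hX : X.PosSemidef)
    (hXB : (fromBlocks A X X B).PosSemidef) : (S * R * S - X).PosSemidef := by
  subst hSS
  have : Invertible S := (isUnit_of_mul_isUnit_left hA.isUnit).invertible
  set Y := S⁻¹ * X * S⁻¹
  have hSYS : S * Y * S = X := by
    simp only [Y, Matrix.mul_assoc, mul_inv_cancel_left_of_invertible, inv_mul_of_invertible,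
      Matrix.mul_one]
  have hY : Y.PosSemidef := by
    simpa only [hS.inv.eq] using hX.mul_mul_conjTranspose_same S⁻¹
  rw [← hSYS, posSemidef_fromBlocks_mul_self_iff B hS hA hY.1, ← hRR] at hXB
  rw [← hSYS, ← Matrix.sub_mul, ← Matrix.mul_sub]
  simpa only [hS.eq] using (hR.sub_of_mul_self_sub hY hXB).mul_mul_conjTranspose_same S

end Matrix

/-- For positive definite matrices `A`, `B`, the geometric mean
`A # B = A^{1/2}(A^{-1/2} B A^{-1/2})^{1/2} A^{1/2}` is the maximum, in the Löwner order, of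
the set of positive semidefinite `X` with `[[A, X],[X, B]] ≥ 0`. -/
theorem geomMean_is_max {n : ℕ} (A B : Matrix (Fin n) (Fin n) ℂ)
    (hA : A.PosDef) (hB : B.PosDef) :
    (wGeomMean A B hA.1 hB.1 (1/2)).PosSemidef ∧
    (Matrix.fromBlocks A (wGeomMean A B hA.1 hB.1 (1/2))
      (wGeomMean A B hA.1 hB.1 (1/2)) B).PosSemidef ∧
    ∀ X : Matrix (Fin n) (Fin n) ℂ, X.PosSemidef →
      (Matrix.fromBlocks A X X B).PosSemidef →
      (wGeomMean A B hA.1 hB.1 (1/2) - X).PosSemidef := by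
  set S := psdPow A hA.1 (1/2)
  set T := psdPow A hA.1 (-(1/2))
  have hS : S.IsHermitian := psdPow_isHermitian A hA.1 _
  have hSS : S * S = A := by rw [← psdPow_add hA]; norm_num [psdPow_one]
  have hT : T = S⁻¹ := (inv_eq_left_inv (by rw [← psdPow_add hA]; norm_num [psdPow_zero])).symm
  have hC : (T * B * T).PosDef := by
    have hSu : IsUnit S := isUnit_of_mul_isUnit_left (hSS ▸ hA.isUnit)
    simpa only [hT, star_eq_conjTranspose, hS.inv.eq] using
      (isUnit_nonsing_inv_iff.mpr hSu).posDef_star_right_conjugate_iff.mpr hB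
  set R := psdPow (T * B * T) hC.1 (1/2)
  have hR : R.PosSemidef := psdPow_posSemidef hC.posSemidef _
  have hRR : R * R = S⁻¹ * B * S⁻¹ := by rw [← psdPow_add hC, ← hT]; norm_num [psdPow_one]
  have hG : wGeomMean A B hA.1 hB.1 (1/2) = S * R * S := rfl
  rw [hG]
  refine ⟨?_, posSemidef_fromBlocks_of_mul_self_eq hA hS hSS hR.1 hRR,
    fun X hX => sub_posSemidef_of_posSemidef_fromBlocks hA hS hSS hR hRR hX⟩
  simpa only [hS.eq] using hR.mul_mul_conjTranspose_same S
end

section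
/- For positive definite matrices A and B, the harmonic mean 2(A^{-1}+B^{-1})^{-1} is dominated in the Löwner order by the geometric mean A # B = A^{1/2}(A^{-1/2} B A^{-1/2})^{1/2} A^{1/2}, which in turn is dominated by the arithmetic mean (A+B)/2. -/
open scoped ComplexOrder
open Matrix

/-! Congruence by `R = A^{1/2}` reduces everything to `X = A^{-1/2} B A^{-1/2}`: `A = R R`,
`B = R X R`, `A # B = R X^{1/2} R` and `(A⁻¹ + B⁻¹)⁻¹ = R (1 + X⁻¹)⁻¹ R`. Every matrix left is a
function of `X`, diagonalised by one unitary, so the two inequalities become the scalar ones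
`2 (1 + x⁻¹)⁻¹ ≤ x^{1/2} ≤ (1 + x) / 2` on the eigenvalues `x > 0`: AM–GM for `x` and for `x⁻¹`. -/

namespace Real

lemma rpow_half_le_half_mul_one_add {x : ℝ} (hx : 0 ≤ x) : x ^ (1/2 : ℝ) ≤ 1/2 * (1 + x) := by
  simpa [mul_add] using
    geom_mean_le_arith_mean2_weighted (p₁ := 1) (by norm_num) (by norm_num) zero_le_one hx
      (add_halves 1)

lemma two_mul_inv_one_add_inv_le_rpow_half {x : ℝ} (hx : 0 < x) :
    2 * (1 + x⁻¹)⁻¹ ≤ x ^ (1/2 : ℝ) := by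
  have hinv := rpow_half_le_half_mul_one_add (inv_nonneg.2 hx.le)
  rw [inv_rpow hx.le] at hinv
  calc 2 * (1 + x⁻¹)⁻¹ = (1/2 * (1 + x⁻¹))⁻¹ := by rw [mul_inv, one_div, inv_inv]
    _ ≤ (x ^ (1/2 : ℝ))⁻¹⁻¹ := inv_anti₀ (by positivity) hinv
    _ = x ^ (1/2 : ℝ) := inv_inv _

end Real

namespace Matrix

section UnitaryDiagonal

variable {m 𝕜 : Type*} [Fintype m] [DecidableEq m] [RCLike 𝕜]

/-- The functional calculus of every Hermitian matrix diagonalised by `U` factors through this map. -/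
noncomputable def unitaryDiagonal (U : unitaryGroup m 𝕜) : (m → ℝ) →ₐ[ℝ] Matrix m m 𝕜 :=
  (Unitary.conjStarAlgAut ℝ _ U).toAlgEquiv.toAlgHom.comp
    ((diagonalAlgHom ℝ).comp (AlgHom.compLeft RCLike.ofRealAm m))

lemma unitaryDiagonal_apply (U : unitaryGroup m 𝕜) (f : m → ℝ) :
    unitaryDiagonal U f =
      (U : Matrix m m 𝕜) * diagonal (fun i => (f i : 𝕜)) * (U : Matrix m m 𝕜)ᴴ :=
  rfl

lemma IsHermitian.eq_unitaryDiagonal {A : Matrix m m 𝕜} (hA : A.IsHermitian) :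
    A = unitaryDiagonal hA.eigenvectorUnitary hA.eigenvalues :=
  hA.spectral_theorem

lemma unitaryDiagonal_inv (U : unitaryGroup m 𝕜) {f : m → ℝ} (hf : ∀ i, f i ≠ 0) :
    (unitaryDiagonal U f)⁻¹ = unitaryDiagonal U f⁻¹ := by
  refine inv_eq_left_inv ?_
  rw [← map_mul, show f⁻¹ * f = 1 from funext fun i => inv_mul_cancel₀ (hf i), map_one]

lemma unitaryDiagonal_sub_posSemidef (U : unitaryGroup m 𝕜) {f g : m → ℝ} (h : g ≤ f) :
    (unitaryDiagonal U f - unitaryDiagonal U g).PosSemidef := by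
  rw [← map_sub, unitaryDiagonal_apply]
  refine (posSemidef_diagonal_iff.2 fun i => ?_).mul_mul_conjTranspose_same _
  simpa using h i

end UnitaryDiagonal

section Congruence

variable {m K : Type*} [Fintype m]

lemma inv_add_inv_mul_mul_same [DecidableEq m] [CommRing K] {R : Matrix m m K}
    (hR : IsUnit R.det) (Y : Matrix m m K) :
    ((R * R)⁻¹ + (R * Y * R)⁻¹)⁻¹ = R * (1 + Y⁻¹)⁻¹ * R := by
  have hsum : (R * R)⁻¹ + (R * Y * R)⁻¹ = R⁻¹ * (1 + Y⁻¹) * R⁻¹ := by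
    simp only [mul_inv_rev]
    noncomm_ring
  rw [hsum, mul_inv_rev, mul_inv_rev, nonsing_inv_nonsing_inv R hR, mul_assoc]

lemma PosSemidef.mul_mul_sub_mul_mul [CommRing K] [PartialOrder K] [StarRing K]
    {R P Q : Matrix m m K} (hR : R.IsHermitian) (h : (P - Q).PosSemidef) :
    (R * P * R - R * Q * R).PosSemidef := by
  rw [← sub_mul, ← mul_sub]
  simpa [hR.eq] using h.mul_mul_conjTranspose_same R

end Congruence

end Matrix

section psdPow

variable {n : ℕ} {A : Matrix (Fin n) (Fin n) ℂ}

lemma psdPow_eq_unitaryDiagonal (hA : A.IsHermitian) (t : ℝ) :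
    psdPow A hA t = unitaryDiagonal hA.eigenvectorUnitary (hA.eigenvalues · ^ t) :=
  rfl

lemma psdPow_mul_psdPow (hA : A.PosDef) (s t : ℝ) :
    psdPow A hA.1 s * psdPow A hA.1 t = psdPow A hA.1 (s + t) := by
  simp only [psdPow_eq_unitaryDiagonal, ← map_mul]
  congr 1
  funext i
  exact (Real.rpow_add (hA.eigenvalues_pos i) s t).symm

lemma psdPow_half_sub_harmonic_posSemidef (hA : A.PosDef) :
    (psdPow A hA.1 (1/2) - (2 : ℂ) • (1 + A⁻¹)⁻¹).PosSemidef := by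
  set U := hA.1.eigenvectorUnitary
  have hpos := hA.eigenvalues_pos
  have hharm : (2 : ℂ) • (1 + A⁻¹)⁻¹ =
      unitaryDiagonal U ((2 : ℝ) • (1 + hA.1.eigenvalues⁻¹)⁻¹) := by
    have hsum_ne (i : Fin n) : (1 + hA.1.eigenvalues⁻¹) i ≠ 0 := by
      have := hpos i
      simp only [Pi.add_apply, Pi.one_apply, Pi.inv_apply]
      positivity
    rw [map_smul, ← unitaryDiagonal_inv U hsum_ne, map_add, map_one,
      ← unitaryDiagonal_inv U fun i => (hpos i).ne', ← hA.1.eq_unitaryDiagonal,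
      ← Complex.coe_smul, Complex.ofReal_ofNat]
  rw [hharm, psdPow_eq_unitaryDiagonal]
  refine unitaryDiagonal_sub_posSemidef U fun i => ?_
  simpa using Real.two_mul_inv_one_add_inv_le_rpow_half (hpos i)

lemma arith_sub_psdPow_half_posSemidef (hA : A.PosDef) :
    ((1/2 : ℂ) • (1 + A) - psdPow A hA.1 (1/2)).PosSemidef := by
  set U := hA.1.eigenvectorUnitary
  have harith : (1/2 : ℂ) • (1 + A) = unitaryDiagonal U ((1/2 : ℝ) • (1 + hA.1.eigenvalues)) := by
    rw [map_smul, map_add, map_one, ← hA.1.eq_unitaryDiagonal, ← Complex.coe_smul]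
    norm_num
  rw [harith, psdPow_eq_unitaryDiagonal]
  refine unitaryDiagonal_sub_posSemidef U fun i => ?_
  simpa using Real.rpow_half_le_half_mul_one_add (hA.eigenvalues_pos i).le

end psdPow

/-- For positive definite matrices `A` and `B`, the harmonic mean `2(A⁻¹+B⁻¹)⁻¹` is
dominated in the Löwner order by the geometric mean `A # B`, which in turn is dominated by
the arithmetic mean `(A+B)/2`. -/
theorem harmonic_le_geom_le_arithmetic {n : ℕ} (A B : Matrix (Fin n) (Fin n) ℂ)
    (hA : A.PosDef) (hB : B.PosDef) :
    (wGeomMean A B hA.1 hB.1 (1/2) - (2 : ℂ) • (A⁻¹ + B⁻¹)⁻¹).PosSemidef ∧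
    ((1/2 : ℂ) • (A + B) - wGeomMean A B hA.1 hB.1 (1/2)).PosSemidef := by
  set R := psdPow A hA.1 (1/2)
  set S := psdPow A hA.1 (-(1/2))
  have hRS : R * S = 1 := by rw [psdPow_mul_psdPow hA]; norm_num [psdPow_zero]
  have hSR : S * R = 1 := by rw [psdPow_mul_psdPow hA]; norm_num [psdPow_zero]
  have hAR : A = R * R := by rw [psdPow_mul_psdPow hA]; norm_num [psdPow_one]
  have hBR : B = R * (S * B * S) * R := by
    simp only [← mul_assoc, hRS, one_mul]
    rw [mul_assoc, hSR, mul_one]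
  have hX : (S * B * S).PosDef := by
    have := (IsUnit.posDef_star_left_conjugate_iff ⟨⟨S, R, hSR, hRS⟩, rfl⟩).2 hB
    rwa [star_eq_conjTranspose, (psdPow_isHermitian A hA.1 _).eq] at this
  have hR := psdPow_isHermitian A hA.1 (1/2)
  have hG : wGeomMean A B hA.1 hB.1 (1/2) = R * psdPow (S * B * S) hX.1 (1/2) * R := rfl
  rw [hG]
  refine ⟨?_, ?_⟩
  · have hharm : (2 : ℂ) • (A⁻¹ + B⁻¹)⁻¹ = R * ((2 : ℂ) • (1 + (S * B * S)⁻¹)⁻¹) * R := by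
      rw [mul_smul_comm, smul_mul_assoc,
        ← inv_add_inv_mul_mul_same (isUnit_det_of_right_inverse hRS), ← hAR, ← hBR]
    rw [hharm]
    exact (psdPow_half_sub_harmonic_posSemidef hX).mul_mul_sub_mul_mul hR
  · have harith : (1/2 : ℂ) • (A + B) = R * ((1/2 : ℂ) • (1 + S * B * S)) * R := by
      rw [mul_smul_comm, smul_mul_assoc, mul_add, add_mul, mul_one, ← hAR, ← hBR]
    rw [harith]
    exact (arith_sub_psdPow_half_posSemidef hX).mul_mul_sub_mul_mul hR
end

section
/- For all positive semidefinite n×n matrices A and B and all 0 ≤ t ≤ 1, the operator norm satisfies ‖(A+B)^t‖ ≤ ‖A^t + B^t‖. -/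
/-!
Let `l = ‖A + B‖`. Since `0 ≤ A, B ≤ A + B`, the spectra of `A` and `B` lie in `[0, l]`, where
`l ^ (t - 1) * x ≤ x ^ t` for `t ≤ 1`; hence `l ^ (t - 1) • (A + B) ≤ A ^ t + B ^ t`, and by
monotonicity of the norm on positive elements
`‖(A + B) ^ t‖ ≤ l ^ t = ‖l ^ (t - 1) • (A + B)‖ ≤ ‖A ^ t + B ^ t‖`.
The argument works verbatim in any C⋆-algebra.
-/

open scoped ComplexOrder Matrix.Norms.L2Operator
open Matrix

theorem Real.rpow_sub_one_mul_le_rpow {x l t : ℝ} (hx : 0 ≤ x) (hxl : x ≤ l) (ht : t ≤ 1) :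
    l ^ (t - 1) * x ≤ x ^ t := by
  rcases hx.eq_or_lt with rfl | hx
  · simpa using Real.rpow_nonneg le_rfl t
  calc l ^ (t - 1) * x ≤ x ^ (t - 1) * x :=
        mul_le_mul_of_nonneg_right (Real.rpow_le_rpow_of_nonpos hx hxl (by linarith)) hx.le
    _ = x ^ t := by rw [← Real.rpow_add_one hx.ne', sub_add_cancel]

theorem spectrum.le_norm_of_mem {A : Type*} [CStarAlgebra A] {a : A} {x : ℝ}
    (hx : x ∈ spectrum ℝ a) : x ≤ ‖a‖ := by
  cases subsingleton_or_nontrivial A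
  · simp [spectrum.of_subsingleton] at hx
  exact (Real.le_norm_self x).trans (spectrum.norm_le_norm_of_mem hx)

namespace CFC

variable {A : Type*} [CStarAlgebra A] [PartialOrder A] [StarOrderedRing A]

theorem norm_rpow_le {a : A} (ha : 0 ≤ a) {t : ℝ} (ht : 0 ≤ t) : ‖a ^ t‖ ≤ ‖a‖ ^ t := by
  rw [rpow_eq_cfc_real ha]
  refine norm_cfc_le (by positivity) fun x hx ↦ ?_
  have hx₀ : 0 ≤ x := spectrum_nonneg_of_nonneg ha hx
  rw [Real.norm_of_nonneg (by positivity)]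
  exact Real.rpow_le_rpow hx₀ (spectrum.le_norm_of_mem hx) ht

theorem smul_le_rpow {a : A} (ha : 0 ≤ a) {l t : ℝ} (hl : ‖a‖ ≤ l) (ht₀ : 0 ≤ t)
    (ht₁ : t ≤ 1) : l ^ (t - 1) • a ≤ a ^ t := by
  rw [rpow_eq_cfc_real ha, ← cfc_const_mul_id (l ^ (t - 1)) a]
  refine cfc_mono (hg := (Real.continuous_rpow_const ht₀).continuousOn) fun x hx ↦ ?_
  exact Real.rpow_sub_one_mul_le_rpow (spectrum_nonneg_of_nonneg ha hx)
    ((spectrum.le_norm_of_mem hx).trans hl) ht₁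

theorem norm_add_rpow_le {a b : A} (ha : 0 ≤ a) (hb : 0 ≤ b) {t : ℝ} (ht₀ : 0 ≤ t)
    (ht₁ : t ≤ 1) : ‖(a + b) ^ t‖ ≤ ‖a ^ t + b ^ t‖ := by
  set l := ‖a + b‖
  have hal : ‖a‖ ≤ l := CStarAlgebra.norm_le_norm_of_nonneg_of_le ha (le_add_of_nonneg_right hb)
  have hbl : ‖b‖ ≤ l := CStarAlgebra.norm_le_norm_of_nonneg_of_le hb (le_add_of_nonneg_left ha)
  rcases (norm_nonneg (a + b)).eq_or_lt with hl | hl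
  · obtain rfl : a = 0 := norm_eq_zero.mp (le_antisymm (hl ▸ hal) (norm_nonneg a))
    obtain rfl : b = 0 := norm_eq_zero.mp (le_antisymm (hl ▸ hbl) (norm_nonneg b))
    rw [add_zero, ← two_smul ℝ, norm_smul, Real.norm_ofNat]
    linarith [norm_nonneg ((0 : A) ^ t)]
  calc ‖(a + b) ^ t‖ ≤ l ^ t := norm_rpow_le (add_nonneg ha hb) ht₀
    _ = ‖l ^ (t - 1) • (a + b)‖ := by
      rw [norm_smul, Real.norm_of_nonneg (by positivity), ← Real.rpow_add_one hl.ne',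
        sub_add_cancel]
    _ ≤ ‖a ^ t + b ^ t‖ := by
      refine CStarAlgebra.norm_le_norm_of_nonneg_of_le (by positivity) ?_
      rw [smul_add]
      exact add_le_add (smul_le_rpow ha hal ht₀ ht₁) (smul_le_rpow hb hbl ht₀ ht₁)

end CFC

open scoped MatrixOrder

theorem psdPow_eq_rpow {n : ℕ} {A : Matrix (Fin n) (Fin n) ℂ} (hA : A.PosSemidef) (t : ℝ) :
    psdPow A hA.1 t = A ^ t := by
  rw [CFC.rpow_eq_cfc_real hA.nonneg, hA.1.cfc_eq]
  rfl

/-- For positive semidefinite matrices `A, B` and `0 ≤ t ≤ 1`, the operator norm satisfies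
`‖(A+B)^t‖ ≤ ‖A^t + B^t‖`. -/
theorem opNorm_add_rpow_le {n : ℕ} (A B : Matrix (Fin n) (Fin n) ℂ)
    (hA : A.PosSemidef) (hB : B.PosSemidef) (t : ℝ) (ht₀ : 0 ≤ t) (ht₁ : t ≤ 1) :
    ‖psdPow (A + B) (hA.1.add hB.1) t‖ ≤ ‖psdPow A hA.1 t + psdPow B hB.1 t‖ := by
  rw [psdPow_eq_rpow (hA.add hB), psdPow_eq_rpow hA, psdPow_eq_rpow hB]
  exact CFC.norm_add_rpow_le hA.nonneg hB.nonneg ht₀ ht₁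
end

section
/- For n×n complex matrices A and B, the largest singular value of the Schur product satisfies σ₁(A ∘ B) ≤ σ₁(A)·σ₁(B). -/
/-!
`A ∘ B` is the principal submatrix of `A ⊗ₖ B` on the diagonal indices `(i, i)`. Such a
compression `Pᴴ (A ⊗ₖ B) P` by an isometry `P` does not increase the operator norm, and
`A ⊗ₖ B = (A ⊗ₖ 1) (1 ⊗ₖ B)`, where `A ↦ A ⊗ₖ 1` and `B ↦ 1 ⊗ₖ B` are star algebra
homomorphisms of C⋆-algebras, hence contractive.
-/

open scoped Matrix.Norms.L2Operator Kronecker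

namespace Matrix

section StarAlgHom

variable (R m n : Type*) [CommSemiring R] [StarRing R]
  [Fintype m] [Fintype n] [DecidableEq m] [DecidableEq n]

def kroneckerOneStarAlgHom : Matrix m m R →⋆ₐ[R] Matrix (m × n) (m × n) R where
  toFun A := A ⊗ₖ (1 : Matrix n n R)
  map_one' := one_kronecker_one
  map_mul' A B := by rw [← mul_kronecker_mul, Matrix.mul_one]
  map_zero' := zero_kronecker _
  map_add' A B := add_kronecker A B _
  commutes' r := by
    simp only [Algebra.algebraMap_eq_smul_one, smul_kronecker, one_kronecker_one]
  map_star' A := by simp [star_eq_conjTranspose, conjTranspose_kronecker]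

def oneKroneckerStarAlgHom : Matrix n n R →⋆ₐ[R] Matrix (m × n) (m × n) R where
  toFun B := (1 : Matrix m m R) ⊗ₖ B
  map_one' := one_kronecker_one
  map_mul' A B := by rw [← mul_kronecker_mul, Matrix.mul_one]
  map_zero' := kronecker_zero _
  map_add' A B := kronecker_add _ A B
  commutes' r := by
    simp only [Algebra.algebraMap_eq_smul_one, kronecker_smul, one_kronecker_one]
  map_star' A := by simp [star_eq_conjTranspose, conjTranspose_kronecker]

end StarAlgHom

lemma submatrix_eq_one_submatrix_mul_mul {α k l m n : Type*} [NonAssocSemiring α]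
    [Fintype m] [Fintype n] [DecidableEq m] [DecidableEq n]
    (M : Matrix m n α) (e : l → m) (f : k → n) :
    M.submatrix e f = (1 : Matrix m m α).submatrix e id * M * (1 : Matrix n n α).submatrix id f := by
  ext i j
  simp [mul_apply, one_apply]

lemma hadamard_eq_submatrix_kronecker {α m n : Type*} [Mul α] (A B : Matrix m n α) :
    hadamard A B = (A ⊗ₖ B).submatrix (fun i ↦ (i, i)) (fun j ↦ (j, j)) :=
  rfl

section L2OpNorm

variable {𝕜 k l m n : Type*} [RCLike 𝕜] [Fintype k] [Fintype l] [Fintype m] [Fintype n]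
  [DecidableEq k] [DecidableEq l] [DecidableEq m] [DecidableEq n]

lemma l2_opNorm_one_le : ‖(1 : Matrix n n 𝕜)‖ ≤ 1 := by
  rw [← diagonal_one, l2_opNorm_diagonal]
  exact (pi_norm_const_le 1).trans norm_one.le

lemma l2_opNorm_one_submatrix_cols_le {e : m → n} (he : Function.Injective e) :
    ‖(1 : Matrix n n 𝕜).submatrix id e‖ ≤ 1 := by
  set P := (1 : Matrix n n 𝕜).submatrix id e
  have hP : Pᴴ * P = 1 := by
    rw [conjTranspose_submatrix, conjTranspose_one,
      ← submatrix_mul _ _ _ _ _ Function.bijective_id, Matrix.mul_one, submatrix_one e he]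
  have hsq : ‖P‖ * ‖P‖ ≤ 1 := by
    rw [← l2_opNorm_conjTranspose_mul_self, hP]
    exact l2_opNorm_one_le
  nlinarith [norm_nonneg P]

lemma l2_opNorm_one_submatrix_rows_le {e : l → m} (he : Function.Injective e) :
    ‖(1 : Matrix m m 𝕜).submatrix e id‖ ≤ 1 := by
  rw [← l2_opNorm_conjTranspose, conjTranspose_submatrix, conjTranspose_one]
  exact l2_opNorm_one_submatrix_cols_le he

lemma l2_opNorm_submatrix_le (M : Matrix m n 𝕜) {e : l → m} {f : k → n}
    (he : Function.Injective e) (hf : Function.Injective f) : ‖M.submatrix e f‖ ≤ ‖M‖ := by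
  rw [submatrix_eq_one_submatrix_mul_mul]
  calc _ ≤ ‖(1 : Matrix m m 𝕜).submatrix e id‖ * ‖M‖ * ‖(1 : Matrix n n 𝕜).submatrix id f‖ :=
        (l2_opNorm_mul _ _).trans (by gcongr; exact l2_opNorm_mul _ _)
    _ ≤ 1 * ‖M‖ * 1 := by
        gcongr
        exacts [l2_opNorm_one_submatrix_rows_le he, l2_opNorm_one_submatrix_cols_le hf]
    _ = ‖M‖ := by ring

end L2OpNorm

lemma l2_opNorm_kronecker_le {m n : Type*} [Fintype m] [Fintype n] [DecidableEq m]
    [DecidableEq n] (A : Matrix m m ℂ) (B : Matrix n n ℂ) : ‖A ⊗ₖ B‖ ≤ ‖A‖ * ‖B‖ := by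
  have hAB : A ⊗ₖ B = kroneckerOneStarAlgHom ℂ m n A * oneKroneckerStarAlgHom ℂ m n B := by
    simp [kroneckerOneStarAlgHom, oneKroneckerStarAlgHom, ← mul_kronecker_mul]
  rw [hAB]
  exact (l2_opNorm_mul _ _).trans <| mul_le_mul (NonUnitalStarAlgHom.norm_apply_le _ A)
    (NonUnitalStarAlgHom.norm_apply_le _ B) (norm_nonneg _) (norm_nonneg _)

end Matrix

/-- The largest singular value (operator norm) of the Schur product satisfies
`σ₁(A ∘ B) ≤ σ₁(A) · σ₁(B)`. -/
theorem schur_product_opNorm_le {n : ℕ} (A B : Matrix (Fin n) (Fin n) ℂ) :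
    ‖Matrix.hadamard A B‖ ≤ ‖A‖ * ‖B‖ := by
  have hdiag : Function.Injective fun i : Fin n ↦ (i, i) := fun _ _ h ↦ congrArg Prod.fst h
  rw [Matrix.hadamard_eq_submatrix_kronecker]
  exact (Matrix.l2_opNorm_submatrix_le _ hdiag hdiag).trans (Matrix.l2_opNorm_kronecker_le A B)
end

section
/- For positive definite n×n matrices A and B, det(A ∘ B) ≥ det(A B) = det(A) det(B). -/
/-!
Oppenheim's inequality `(∏ i, A i i) * det B ≤ det (A ⊙ B)` is proved by induction on the size,
splitting off one index. Write `B = P + (0 ⊕ S)` where `S` is the Schur complement of `b₁₁` and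
`P` is positive semidefinite with the same first row and column as `B`. By Schur's product
theorem `A ⊙ P` is positive semidefinite, so monotonicity of `det` on positive matrices gives
`det (A ⊙ B) ≥ a₁₁ b₁₁ det (A₂₂ ⊙ S)`, while `det B = b₁₁ det S`. Hadamard's inequality
`det B ≤ ∏ i, B i i` is the case `A = 1` of Oppenheim's inequality, and the two together give
`det A * det B ≤ det (A ⊙ B)`.
-/

open scoped ComplexOrder MatrixOrder

namespace Matrix

lemma fromBlocks_hadamard_fromBlocks {m n α : Type*} [Mul α] (A : Matrix m m α)
    (B : Matrix m n α) (C : Matrix n m α) (D : Matrix n n α) (A' : Matrix m m α) (B' : Matrix m n α)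
    (C' : Matrix n m α) (D' : Matrix n n α) :
    fromBlocks A B C D ⊙ fromBlocks A' B' C' D' =
      fromBlocks (A ⊙ A') (B ⊙ B') (C ⊙ C') (D ⊙ D') := by
  ext (i | i) (j | j) <;> rfl

variable {𝕜 : Type*} [RCLike 𝕜] {m n : Type*} [Fintype m] [Fintype n] [DecidableEq m]
  [DecidableEq n]

lemma PosSemidef.one_le_det_one_add {R : Matrix n n 𝕜} (hR : R.PosSemidef) : 1 ≤ (1 + R).det := by
  set U := hR.1.eigenvectorUnitary
  have hdiag : 1 + R =
      Unitary.conjStarAlgAut 𝕜 _ U (1 + diagonal (RCLike.ofReal ∘ hR.1.eigenvalues)) := by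
    rw [map_add, map_one, ← hR.1.spectral_theorem]
  rw [hdiag, Unitary.conjStarAlgAut_apply, det_mul_right_comm, mem_unitaryGroup_iff.mp U.2, one_mul,
    ← diagonal_one, diagonal_add, det_diagonal]
  refine Finset.one_le_prod fun i _ ↦ le_add_of_nonneg_right ?_
  exact RCLike.ofReal_nonneg.mpr (hR.eigenvalues_nonneg i)

lemma PosDef.det_le_det_add {A B : Matrix n n 𝕜} (hA : A.PosDef) (hB : B.PosSemidef) :
    A.det ≤ (A + B).det := by
  obtain ⟨C, rfl⟩ := CStarAlgebra.nonneg_iff_eq_star_mul_self.mp hA.posSemidef.nonneg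
  let _ := (isUnit_of_mul_isUnit_right hA.isUnit).invertible
  have hR : (Cᴴ⁻¹ * B * C⁻¹).PosSemidef := by
    simpa [conjTranspose_nonsing_inv] using hB.mul_mul_conjTranspose_same Cᴴ⁻¹
  have hsplit : star C * C + B = Cᴴ * (1 + Cᴴ⁻¹ * B * C⁻¹) * C := by
    rw [star_eq_conjTranspose, mul_add, add_mul, mul_one, ← Matrix.mul_assoc, ← Matrix.mul_assoc,
      mul_inv_of_invertible, one_mul, Matrix.mul_assoc, inv_mul_of_invertible, mul_one]
  rw [hsplit, det_mul_right_comm, det_mul (Cᴴ * C)]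
  exact le_mul_of_one_le_right hA.det_pos.le hR.one_le_det_one_add

lemma PosDef.posDef_schur_complement₁₁ {A : Matrix m m 𝕜} {B : Matrix m n 𝕜} {D : Matrix n n 𝕜}
    (h : (fromBlocks A B Bᴴ D).PosDef) : (D - Bᴴ * A⁻¹ * B).PosDef := by
  have hA : A.PosDef := h.submatrix Sum.inl_injective
  let _ := hA.isUnit.invertible
  have hdet := det_fromBlocks₁₁ A B Bᴴ D
  rw [invOf_eq_nonsing_inv] at hdet
  refine ((PosDef.fromBlocks₁₁ B D hA).mp h.posSemidef).posDef_iff_det_ne_zero.mpr fun h0 ↦ ?_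
  rw [h0, mul_zero] at hdet
  exact h.det_pos.ne' hdet

lemma det_mul_det_le_det_fromBlocks_add {A : Matrix m m 𝕜} {B : Matrix m n 𝕜}
    {D K : Matrix n n 𝕜} (hA : A.PosDef) (hP : (fromBlocks A B Bᴴ D).PosSemidef) (hK : K.PosDef) :
    A.det * K.det ≤ (fromBlocks A B Bᴴ (D + K)).det := by
  let _ := hA.isUnit.invertible
  rw [det_fromBlocks₁₁, invOf_eq_nonsing_inv, add_sub_right_comm, add_comm]
  exact mul_le_mul_of_nonneg_left (hK.det_le_det_add ((PosDef.fromBlocks₁₁ B D hA).mp hP))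
    hA.det_pos.le

omit [Fintype m] [Fintype n] [DecidableEq m] [DecidableEq n] in
lemma IsHermitian.fromBlocks_conjTranspose_toBlocks₁₂ {M : Matrix (m ⊕ n) (m ⊕ n) 𝕜}
    (hM : M.IsHermitian) :
    Matrix.fromBlocks M.toBlocks₁₁ M.toBlocks₁₂ M.toBlocks₁₂ᴴ M.toBlocks₂₂ = M := by
  convert Matrix.fromBlocks_toBlocks M using 2
  ext i j
  exact hM.apply (Sum.inr i) (Sum.inl j)

theorem PosDef.det_hadamard_mul_det_hadamard_schur_le {A₁ B₁ : Matrix m m 𝕜}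
    {A₂ B₂ : Matrix m n 𝕜} {A₄ B₄ : Matrix n n 𝕜} (hA : (fromBlocks A₁ A₂ A₂ᴴ A₄).PosDef)
    (hB : (fromBlocks B₁ B₂ B₂ᴴ B₄).PosDef) :
    (A₁ ⊙ B₁).det * (A₄ ⊙ (B₄ - B₂ᴴ * B₁⁻¹ * B₂)).det ≤
      (fromBlocks A₁ A₂ A₂ᴴ A₄ ⊙ fromBlocks B₁ B₂ B₂ᴴ B₄).det := by
  have hB₁ : B₁.PosDef := hB.submatrix Sum.inl_injective
  let _ := hB₁.isUnit.invertible
  have hP : (fromBlocks B₁ B₂ B₂ᴴ (B₂ᴴ * B₁⁻¹ * B₂)).PosSemidef :=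
    (PosDef.fromBlocks₁₁ B₂ _ hB₁).mpr (by simpa using PosSemidef.zero)
  have hAP := hA.posSemidef.hadamard hP
  rw [fromBlocks_hadamard_fromBlocks, ← hadamard_comm B₂ᴴ, ← conjTranspose_hadamard] at hAP
  conv_rhs => rw [← add_sub_cancel (B₂ᴴ * B₁⁻¹ * B₂) B₄, fromBlocks_hadamard_fromBlocks,
    hadamard_add, ← hadamard_comm B₂ᴴ, ← conjTranspose_hadamard]
  exact det_mul_det_le_det_fromBlocks_add ((hA.submatrix Sum.inl_injective).hadamard hB₁) hAP
    ((hA.submatrix Sum.inr_injective).hadamard hB.posDef_schur_complement₁₁)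

theorem PosDef.prod_diag_mul_det_le_det_hadamard_of_unique [Unique m]
    {A B : Matrix (m ⊕ n) (m ⊕ n) 𝕜} (hA : A.PosDef) (hB : B.PosDef)
    (h : ∀ {A₄ S : Matrix n n 𝕜}, A₄.PosDef → S.PosDef → (∏ i, A₄ i i) * S.det ≤ (A₄ ⊙ S).det) :
    (∏ i, A i i) * B.det ≤ (A ⊙ B).det := by
  obtain ⟨A₁, A₂, A₄, rfl⟩ : ∃ A₁ A₂ A₄, A = fromBlocks A₁ A₂ A₂ᴴ A₄ :=
    ⟨_, _, _, hA.1.fromBlocks_conjTranspose_toBlocks₁₂.symm⟩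
  obtain ⟨B₁, B₂, B₄, rfl⟩ : ∃ B₁ B₂ B₄, B = fromBlocks B₁ B₂ B₂ᴴ B₄ :=
    ⟨_, _, _, hB.1.fromBlocks_conjTranspose_toBlocks₁₂.symm⟩
  have hB₁ : B₁.PosDef := hB.submatrix Sum.inl_injective
  let _ := hB₁.isUnit.invertible
  calc _ = (A₁ ⊙ B₁).det * ((∏ i, A₄ i i) * (B₄ - B₂ᴴ * B₁⁻¹ * B₂).det) := by
        rw [Fintype.prod_sum_type, Fintype.prod_unique, det_fromBlocks₁₁, invOf_eq_nonsing_inv,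
          det_unique B₁, det_unique (A₁ ⊙ B₁)]
        simp only [fromBlocks_apply₁₁, fromBlocks_apply₂₂, hadamard_apply]
        ring
    _ ≤ (A₁ ⊙ B₁).det * (A₄ ⊙ (B₄ - B₂ᴴ * B₁⁻¹ * B₂)).det :=
        mul_le_mul_of_nonneg_left
          (h (hA.submatrix Sum.inr_injective) hB.posDef_schur_complement₁₁)
          ((hA.submatrix Sum.inl_injective).hadamard hB₁).det_pos.le
    _ ≤ _ := hA.det_hadamard_mul_det_hadamard_schur_le hB

theorem PosDef.prod_diag_mul_det_le_det_hadamard {ι : Type*} [Fintype ι] [DecidableEq ι]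
    {A B : Matrix ι ι 𝕜} (hA : A.PosDef) (hB : B.PosDef) :
    (∏ i, A i i) * B.det ≤ (A ⊙ B).det := by
  induction hn : Fintype.card ι generalizing ι with
  | zero =>
    have := Fintype.card_eq_zero_iff.mp hn
    simp
  | succ k ih =>
    obtain ⟨i₀⟩ : Nonempty ι := Fintype.card_pos_iff.mp (by omega)
    let e := Equiv.sumCompl (· = i₀)
    have hcard : Fintype.card {i // ¬i = i₀} = k := by simp [Fintype.card_subtype_compl, hn]
    have := (hA.submatrix e.injective).prod_diag_mul_det_le_det_hadamard_of_unique
      (hB.submatrix e.injective) fun hA₄ hS ↦ ih hA₄ hS hcard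
    rwa [← submatrix_hadamard, det_submatrix_equiv_self, det_submatrix_equiv_self,
      Fintype.prod_equiv e (fun i ↦ A.submatrix e e i i) (fun i ↦ A i i) fun _ ↦ rfl] at this

theorem PosDef.det_le_prod_diag {A : Matrix n n 𝕜} (hA : A.PosDef) : A.det ≤ ∏ i, A i i := by
  simpa [one_hadamard, det_diagonal] using PosDef.one.prod_diag_mul_det_le_det_hadamard hA

theorem PosDef.det_mul_det_le_det_hadamard {A B : Matrix n n 𝕜} (hA : A.PosDef) (hB : B.PosDef) :
    A.det * B.det ≤ (A ⊙ B).det :=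
  (mul_le_mul_of_nonneg_right hA.det_le_prod_diag hB.det_pos.le).trans
    (hA.prod_diag_mul_det_le_det_hadamard hB)

end Matrix

/-- For positive definite matrices `A` and `B`, `det (A ∘ B) ≥ det (A B) = det A · det B`,
where `∘` is the Schur (entrywise) product and `≤` is the order on `ℂ`. -/
theorem det_hadamard_ge_det_mul {n : ℕ} (A B : Matrix (Fin n) (Fin n) ℂ)
    (hA : A.PosDef) (hB : B.PosDef) :
    (A * B).det ≤ (Matrix.hadamard A B).det ∧ (A * B).det = A.det * B.det := by
  rw [Matrix.det_mul]
  exact ⟨hA.det_mul_det_le_det_hadamard hB, rfl⟩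
end
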